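/- arXiv:2206.06325 — 4 statements merged into one kernel-verified Lean document; each statement's English description precedes it below -/
import Mathlib

section
/- Let 0 < a ≤ 1 and let H_a : ℝ³ → [0,1] be the characteristic function of the set ⋃_{m ∈ ℤ} ([-10,10] × ℝ² + ((sgn m)|m|^{1/a}, 0, 0)), where sgn m = m/|m| for m ≠ 0 and sgn 0 = 1. Then there is a constant C, depending only on a, such that for every x₀ ∈ ℝ³ and every R ≥ 1, ∫_{B(x₀,R)} H_a(x) dx ≤ C R^{2+a}. (That is, H_a is a weight of fractal dimension α = 2+a.) -/
/-!
The weight is the indicator of `{x | x 0 ∈ E}`, where `E` is the union of the intervals of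
length 20 centred at `sgn m |m|^{1/a}`. A ball of radius `R` lies in a cube, so its mass is at
most `(2R)²` times the length of `E ∩ [T - R, T + R]`. Since `t ↦ t^a` is subadditive for
`a ≤ 1`, the integers `n ≥ 0` with `n^{1/a} ∈ [s, s + L]` (`s ≥ 0`) lie in
`[s^a, s^a + L^a]`; hence at most `2 ((2R + 20)^a + 1) ≤ 46 R^a` of the intervals meet
`[T - R, T + R]`.
-/

open MeasureTheory Metric Set

theorem Int.card_Icc_ceil_floor_le {x y : ℝ} (hxy : x ≤ y) :
    ((Finset.Icc ⌈x⌉ ⌊y⌋).card : ℝ) ≤ y - x + 1 := by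
  have hceil := Int.ceil_lt_add_one x
  have hfloor := Int.lt_floor_add_one y
  have hnonneg : 0 ≤ ⌊y⌋ + 1 - ⌈x⌉ := by
    have : (⌈x⌉ : ℝ) < ⌊y⌋ + 2 := by linarith
    have : ⌈x⌉ < ⌊y⌋ + 2 := by exact_mod_cast this
    omega
  rw [Int.card_Icc, ← Int.cast_natCast, Int.toNat_of_nonneg hnonneg]
  push_cast
  linarith [Int.floor_le y, Int.le_ceil x]

theorem volume_Icc_inter_iUnion_closedBall_le {ι : Type*} (c : ι → ℝ) (r u v : ℝ)
    (F : Finset ι) (hF : ∀ i, c i ∈ Icc (u - r) (v + r) → i ∈ F) :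
    volume (Icc u v ∩ ⋃ i, closedBall (c i) r) ≤ F.card * ENNReal.ofReal (2 * r) := by
  have hcover : Icc u v ∩ ⋃ i, closedBall (c i) r ⊆ ⋃ i ∈ F, closedBall (c i) r := by
    rintro t ⟨⟨htu, htv⟩, ht⟩
    obtain ⟨i, hi⟩ := mem_iUnion.mp ht
    have hi' : t ∈ Icc (c i - r) (c i + r) := by rwa [← Real.closedBall_eq_Icc]
    exact mem_biUnion (hF i ⟨by linarith [hi'.2], by linarith [hi'.1]⟩) hi
  calc volume (Icc u v ∩ ⋃ i, closedBall (c i) r)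
      ≤ ∑ i ∈ F, volume (closedBall (c i) r) :=
        (measure_mono hcover).trans (measure_biUnion_finset_le F _)
    _ = F.card * ENNReal.ofReal (2 * r) := by
        simp only [Real.volume_closedBall, Finset.sum_const, nsmul_eq_mul]

theorem EuclideanSpace.volume_ball_inter_coord_preimage_le {ι : Type*} [Fintype ι]
    (x₀ : EuclideanSpace ℝ ι) (R : ℝ) (i : ι) (E : Set ℝ) :
    volume (ball x₀ R ∩ {x | x i ∈ E}) ≤
      volume (Icc (x₀ i - R) (x₀ i + R) ∩ E) *
        ENNReal.ofReal (2 * R) ^ (Fintype.card ι - 1) := by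
  classical
  set box : ι → Set ℝ :=
    Function.update (fun j => Icc (x₀ j - R) (x₀ j + R)) i (Icc (x₀ i - R) (x₀ i + R) ∩ E)
  have hsub : ball x₀ R ∩ {x | x i ∈ E} ⊆
      (MeasurableEquiv.toLp 2 (ι → ℝ)).symm ⁻¹' univ.pi box := by
    rintro x ⟨hx, hxE⟩ j -
    have hj : x j ∈ Icc (x₀ j - R) (x₀ j + R) := by
      have := (PiLp.dist_apply_le x x₀ j).trans_lt (mem_ball.mp hx)
      rw [Real.dist_eq, abs_lt] at this
      constructor <;> linarith
    rcases eq_or_ne j i with rfl | hji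
    · simpa [box] using And.intro hj hxE
    · simpa [box, hji] using hj
  have hvol :=
    (EuclideanSpace.volume_preserving_symm_measurableEquiv_toLp ι).measure_preimage_equiv
  calc volume (ball x₀ R ∩ {x | x i ∈ E})
      ≤ volume (univ.pi box) := (measure_mono hsub).trans_eq (hvol _)
    _ = _ := by
        rw [volume_pi_pi, ← Finset.mul_prod_erase _ _ (Finset.mem_univ i)]
        congr 1
        · simp [box]
        · rw [Finset.prod_congr rfl fun j hj => by
              rw [show box j = Icc (x₀ j - R) (x₀ j + R) from
                Function.update_of_ne (Finset.ne_of_mem_erase hj) _ _, Real.volume_Icc,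
                show x₀ j + R - (x₀ j - R) = 2 * R by ring]]
          rw [Finset.prod_const, Finset.card_erase_of_mem (Finset.mem_univ i), Finset.card_univ]

noncomputable section

def signedRoot (a : ℝ) (m : ℤ) : ℝ := (if 0 ≤ m then 1 else -1) * |(m : ℝ)| ^ (1 / a)

def rootWindow (a u v : ℝ) : Finset ℤ :=
  Finset.Icc ⌈max u 0 ^ a⌉ ⌊max u 0 ^ a + (v - u) ^ a⌋

def signedRootWindow (a u v : ℝ) : Finset ℤ :=
  rootWindow a u v ∪ (rootWindow a (-v) (-u)).image Neg.neg

end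

theorem mem_rootWindow {a u v : ℝ} (ha0 : 0 < a) (ha1 : a ≤ 1) {n : ℤ} (hn : 0 ≤ n)
    (h : (n : ℝ) ^ (1 / a) ∈ Icc u v) : n ∈ rootWindow a u v := by
  obtain ⟨hu, hv⟩ := h
  have hn' : (0 : ℝ) ≤ n := by exact_mod_cast hn
  have hroot : ((n : ℝ) ^ (1 / a)) ^ a = n := by
    rw [← Real.rpow_mul hn', one_div, inv_mul_cancel₀ ha0.ne', Real.rpow_one]
  have hlo : max u 0 ^ a ≤ n := calc
    max u 0 ^ a ≤ ((n : ℝ) ^ (1 / a)) ^ a := by gcongr; exact max_le hu (by positivity)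
    _ = n := hroot
  have hhi : (n : ℝ) ≤ max u 0 ^ a + (v - u) ^ a := calc
    (n : ℝ) = ((n : ℝ) ^ (1 / a)) ^ a := hroot.symm
    _ ≤ (max u 0 + (v - u)) ^ a := by gcongr; linarith [le_max_left u 0]
    _ ≤ max u 0 ^ a + (v - u) ^ a :=
      Real.rpow_add_le_add_rpow (le_max_right _ _) (by linarith) ha0.le ha1
  exact Finset.mem_Icc.mpr ⟨Int.ceil_le.mpr hlo, Int.le_floor.mpr hhi⟩

theorem card_rootWindow_le {a u v : ℝ} (huv : u ≤ v) :
    ((rootWindow a u v).card : ℝ) ≤ (v - u) ^ a + 1 := by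
  have := Int.card_Icc_ceil_floor_le
    (le_add_of_nonneg_right (Real.rpow_nonneg (sub_nonneg.mpr huv) a) : max u 0 ^ a ≤ _)
  rw [rootWindow]
  linarith

theorem signedRoot_of_nonneg {a : ℝ} {m : ℤ} (hm : 0 ≤ m) :
    signedRoot a m = (m : ℝ) ^ (1 / a) := by
  rw [signedRoot, if_pos hm, one_mul, abs_of_nonneg (Int.cast_nonneg_iff.mpr hm)]

theorem signedRoot_of_neg {a : ℝ} {m : ℤ} (hm : m < 0) :
    signedRoot a m = -((-m : ℤ) : ℝ) ^ (1 / a) := by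
  rw [signedRoot, if_neg hm.not_ge, neg_one_mul, abs_of_neg (Int.cast_lt_zero.mpr hm),
    Int.cast_neg]

theorem mem_signedRootWindow {a u v : ℝ} (ha0 : 0 < a) (ha1 : a ≤ 1) {m : ℤ}
    (h : signedRoot a m ∈ Icc u v) : m ∈ signedRootWindow a u v := by
  rcases le_or_gt 0 m with hm | hm
  · rw [signedRoot_of_nonneg hm] at h
    exact Finset.mem_union_left _ (mem_rootWindow ha0 ha1 hm h)
  · rw [signedRoot_of_neg hm] at h
    have h' : ((-m : ℤ) : ℝ) ^ (1 / a) ∈ Icc (-v) (-u) :=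
      ⟨by linarith [h.2], by linarith [h.1]⟩
    exact Finset.mem_union_right _
      (Finset.mem_image.mpr ⟨-m, mem_rootWindow ha0 ha1 (by omega) h', neg_neg m⟩)

theorem card_signedRootWindow_le {a u v : ℝ} (huv : u ≤ v) :
    ((signedRootWindow a u v).card : ℝ) ≤ 2 * ((v - u) ^ a + 1) := by
  have hcard : (signedRootWindow a u v).card ≤
      (rootWindow a u v).card + (rootWindow a (-v) (-u)).card :=
    (Finset.card_union_le _ _).trans (Nat.add_le_add_left Finset.card_image_le _)
  have h₁ := card_rootWindow_le (a := a) huv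
  have h₂ := card_rootWindow_le (a := a) (neg_le_neg huv)
  rw [show -u - -v = v - u by ring] at h₂
  have : ((signedRootWindow a u v).card : ℝ) ≤
      (rootWindow a u v).card + (rootWindow a (-v) (-u)).card := by exact_mod_cast hcard
  linarith

theorem volume_Icc_inter_iUnion_closedBall_signedRoot_le {a : ℝ} (ha0 : 0 < a) (ha1 : a ≤ 1)
    (T : ℝ) {R : ℝ} (hR : 1 ≤ R) :
    volume (Icc (T - R) (T + R) ∩ ⋃ m, closedBall (signedRoot a m) 10) ≤
      ENNReal.ofReal (920 * R ^ a) := by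
  set F := signedRootWindow a (T - R - 10) (T + R + 10)
  have hwidth : (T + R + 10 - (T - R - 10)) ^ a ≤ 22 * R ^ a := calc
    (T + R + 10 - (T - R - 10)) ^ a ≤ (22 * R) ^ a := by gcongr <;> linarith
    _ = 22 ^ a * R ^ a := Real.mul_rpow (by norm_num) (by linarith)
    _ ≤ 22 ^ (1 : ℝ) * R ^ a := by gcongr; norm_num
    _ = 22 * R ^ a := by rw [Real.rpow_one]
  have hcard : (F.card : ℝ) ≤ 46 * R ^ a := by
    have := card_signedRootWindow_le (a := a) (show T - R - 10 ≤ T + R + 10 by linarith)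
    linarith [Real.one_le_rpow hR ha0.le]
  calc volume (Icc (T - R) (T + R) ∩ ⋃ m, closedBall (signedRoot a m) 10)
      ≤ F.card * ENNReal.ofReal (2 * 10) :=
        volume_Icc_inter_iUnion_closedBall_le _ _ _ _ F fun _ hm =>
          mem_signedRootWindow ha0 ha1 hm
    _ = ENNReal.ofReal (F.card * 20) := by
        rw [ENNReal.ofReal_mul (Nat.cast_nonneg _), ENNReal.ofReal_natCast]; norm_num
    _ ≤ ENNReal.ofReal (920 * R ^ a) := ENNReal.ofReal_le_ofReal (by linarith)

/-- The weight `H_a`, the indicator of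
`⋃_{m ∈ ℤ} ([-10,10] × ℝ² + ((sgn m)|m|^{1/a}, 0, 0))`, is a weight of
fractal dimension `2 + a`: `∫_{B(x₀,R)} H_a ≤ C R^{2+a}` for all `R ≥ 1`. -/
theorem stmt_0 (a : ℝ) (ha0 : 0 < a) (ha1 : a ≤ 1) :
    ∃ C : ℝ, 0 < C ∧ ∀ (x₀ : EuclideanSpace ℝ (Fin 3)) (R : ℝ), 1 ≤ R →
      (∫ x in ball x₀ R,
        Set.indicator {x : EuclideanSpace ℝ (Fin 3) |
            ∃ m : ℤ, |x 0 - (if 0 ≤ m then (1:ℝ) else -1) * |(m : ℝ)| ^ (1/a)| ≤ 10}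
          (fun _ => (1:ℝ)) x)
      ≤ C * R ^ (2 + a) := by
  refine ⟨3680, by norm_num, fun x₀ R hR => ?_⟩
  set E := ⋃ m, closedBall (signedRoot a m) 10
  have hS : {x : EuclideanSpace ℝ (Fin 3) |
      ∃ m : ℤ, |x 0 - (if 0 ≤ m then (1:ℝ) else -1) * |(m : ℝ)| ^ (1/a)| ≤ 10} =
      {x | x 0 ∈ E} := by
    ext x; simp [E, signedRoot, Real.dist_eq]
  have hE : MeasurableSet E := MeasurableSet.iUnion fun _ => measurableSet_closedBall
  have hSmeas : MeasurableSet {x : EuclideanSpace ℝ (Fin 3) | x 0 ∈ E} :=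
    measurableSet_preimage (by fun_prop) hE
  rw [hS, setIntegral_indicator hSmeas, setIntegral_const, smul_eq_mul, mul_one]
  have hbound := (EuclideanSpace.volume_ball_inter_coord_preimage_le x₀ R 0 E).trans
    (mul_le_mul_left (volume_Icc_inter_iUnion_closedBall_signedRoot_le ha0 ha1 (x₀ 0) hR) _)
  have hR0 : 0 < R := by linarith
  rw [← ENNReal.ofReal_pow (by linarith), ← ENNReal.ofReal_mul (by positivity),
    Fintype.card_fin] at hbound
  calc volume.real (ball x₀ R ∩ {x | x 0 ∈ E}) ≤ 920 * R ^ a * (2 * R) ^ (3 - 1) :=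
        ENNReal.toReal_le_of_le_ofReal (by positivity) hbound
    _ = 3680 * R ^ (2 + a) := by
        rw [Real.rpow_add hR0, Real.rpow_two]; ring
end

section
/- Let 0 < α ≤ 3 and K ≥ 1. Suppose H : ℝ³ → [0,1] satisfies ∫_{B(x₀,ρ)} H dx ≤ A ρ^α for all x₀ ∈ ℝ³ and ρ ≥ 1, with A > 0. Tile ℝ³ by cubes {Q_l} of side-length K/3 and define H_K(x) = A^{-1} K^{-α} ∫_{Q_l} H(y) dy for x ∈ Q_l. Then there is an absolute constant C such that ∫_{B(x₀,R)} H_K(x) dx ≤ C K^{3-α} R^α for all x₀ ∈ ℝ³ and R ≥ 1. -/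
/-!
If `R ≤ K`, every cube `Q ∋ x` lies in `B(x, K)`, so `∫_Q H ≤ A K^α` and `H_K ≤ 1`; the integral
over `B(x₀, R)` is then at most `|B(x₀, R)| = (4π/3) R³ ≤ (4π/3) K^{3-α} R^α`.
If `R ≥ K`, exchanging the order of integration shows that each point `y` is counted with weight
at most `|Q| = (K/3)³`, and only for `y ∈ B(x₀, R + K)`; hence the integral is at most
`A⁻¹ K^{-α} (K/3)³ A (R + K)^α ≤ (8/27) K^{3-α} R^α`.
-/

open MeasureTheory Metric Real
open scoped ENNReal

section Tonelli

variable {α β : Type*} [MeasurableSpace α] [MeasurableSpace β] {μ : Measure α} {ν : Measure β}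
  [SFinite μ] [SFinite ν]

theorem lintegral_setLIntegral_preimage_mk_eq {S : Set (α × β)} (hS : MeasurableSet S)
    {f : β → ℝ≥0∞} (hf : Measurable f) :
    ∫⁻ x, ∫⁻ y in Prod.mk x ⁻¹' S, f y ∂ν ∂μ = ∫⁻ y, μ ((·, y) ⁻¹' S) * f y ∂ν := by
  have hsection : ∀ x, ∫⁻ y in Prod.mk x ⁻¹' S, f y ∂ν
      = ∫⁻ y, S.indicator (f ∘ Prod.snd) (x, y) ∂ν := fun x => by
    rw [← lintegral_indicator (measurable_prodMk_left hS)]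
    rfl
  simp_rw [hsection]
  have hkernel : AEMeasurable (Function.uncurry fun x y => S.indicator (f ∘ Prod.snd) (x, y))
      (μ.prod ν) := ((hf.comp measurable_snd).indicator hS).aemeasurable
  rw [lintegral_lintegral_swap hkernel]
  refine lintegral_congr fun y => ?_
  rw [mul_comm, ← lintegral_indicator_const (measurable_prodMk_right hS)]
  rfl

end Tonelli

section GridCube

variable {ι : Type*}

/-- The cell of the grid of half-open cubes `∏ i, [c n_i, c (n_i + 1))`, `n ∈ ℤ^ι`, that contains
`x`; with `c = K / 3` these are the paper's cubes `Q_l`. -/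
def gridCube (c : ℝ) (x : EuclideanSpace ℝ ι) : Set (EuclideanSpace ℝ ι) :=
  {y | ∀ i, ⌊y i / c⌋ = ⌊x i / c⌋}

variable {c : ℝ} {x y : EuclideanSpace ℝ ι}

theorem mem_gridCube_comm : y ∈ gridCube c x ↔ x ∈ gridCube c y := by
  simp only [gridCube, Set.mem_ofPred_eq, eq_comm]

theorem measurableSet_setOf_mem_gridCube [Fintype ι] (c : ℝ) :
    MeasurableSet {p : EuclideanSpace ℝ ι × EuclideanSpace ℝ ι | p.2 ∈ gridCube c p.1} := by
  have hfloor : ∀ i, Measurable fun y : EuclideanSpace ℝ ι => ⌊y i / c⌋ := fun i =>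
    ((EuclideanSpace.proj (𝕜 := ℝ) i).continuous.measurable.div_const c).floor
  change MeasurableSet
    {p : EuclideanSpace ℝ ι × EuclideanSpace ℝ ι | ∀ i, ⌊p.2 i / c⌋ = ⌊p.1 i / c⌋}
  rw [Set.ofPred_forall]
  exact MeasurableSet.iInter fun i =>
    measurableSet_eq_fun ((hfloor i).comp measurable_snd) ((hfloor i).comp measurable_fst)

theorem measurableSet_gridCube [Fintype ι] (c : ℝ) (x : EuclideanSpace ℝ ι) :
    MeasurableSet (gridCube c x) :=
  measurable_prodMk_left (measurableSet_setOf_mem_gridCube c)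

theorem gridCube_eq_preimage_pi (hc : 0 < c) (x : EuclideanSpace ℝ ι) :
    gridCube c x = WithLp.ofLp ⁻¹'
      Set.univ.pi fun i => Set.Ico (c * ⌊x i / c⌋) (c * ⌊x i / c⌋ + c) := by
  ext y
  simp only [gridCube, Set.mem_ofPred_eq, Set.mem_preimage, Set.mem_univ_pi, Set.mem_Ico,
    Int.floor_eq_iff, le_div_iff₀' hc, div_lt_iff₀' hc, mul_add, mul_one]

theorem volume_gridCube [Fintype ι] (hc : 0 < c) (x : EuclideanSpace ℝ ι) :
    volume (gridCube c x) = ENNReal.ofReal c ^ Fintype.card ι := by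
  rw [gridCube_eq_preimage_pi hc, (PiLp.volume_preserving_ofLp ι).measure_preimage
    (MeasurableSet.univ_pi fun _ => measurableSet_Ico).nullMeasurableSet, volume_pi_pi]
  simp [Real.volume_Ico]

theorem abs_sub_lt_of_floor_div_eq {a b : ℝ} (hc : 0 < c) (h : ⌊a / c⌋ = ⌊b / c⌋) :
    |a - b| < c := by
  have := Int.abs_sub_lt_one_of_floor_eq_floor h
  rwa [← sub_div, abs_div, abs_of_pos hc, div_lt_one hc] at this

theorem dist_le_of_mem_gridCube [Fintype ι] (hc : 0 < c) (hy : y ∈ gridCube c x) :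
    dist y x ≤ √(Fintype.card ι) * c := by
  have hcoord : ∀ i, dist (y i) (x i) ^ 2 ≤ c ^ 2 := fun i =>
    pow_le_pow_left₀ dist_nonneg (abs_sub_lt_of_floor_div_eq hc (hy i)).le 2
  calc dist y x = √(∑ i, dist (y i) (x i) ^ 2) := EuclideanSpace.dist_eq y x
    _ ≤ √(∑ _i : ι, c ^ 2) := Real.sqrt_le_sqrt (Finset.sum_le_sum fun i _ => hcoord i)
    _ = √(Fintype.card ι) * c := by
      rw [Finset.sum_const, Finset.card_univ, nsmul_eq_mul, Real.sqrt_mul (by positivity),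
        Real.sqrt_sq hc.le]

theorem setLIntegral_lintegral_gridCube_le [Fintype ι] (hc : 0 < c)
    {f : EuclideanSpace ℝ ι → ℝ≥0∞} (hf : Measurable f) {B T : Set (EuclideanSpace ℝ ι)}
    (hBT : ∀ x ∈ B, gridCube c x ⊆ T) :
    ∫⁻ x in B, ∫⁻ y in gridCube c x, f y ≤ ENNReal.ofReal c ^ Fintype.card ι * ∫⁻ y in T, f y := by
  have hweight : ∀ y, volume.restrict B (gridCube c y) * f y
      ≤ ENNReal.ofReal c ^ Fintype.card ι * T.indicator f y := fun y => by
    by_cases hy : y ∈ T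
    · rw [Set.indicator_of_mem hy, ← volume_gridCube hc y]
      exact mul_le_mul_left (Measure.restrict_apply_le _ _) _
    · have : volume.restrict B (gridCube c y) = 0 := by
        rw [Measure.restrict_apply (measurableSet_gridCube c y), measure_eq_zero_iff_ae_notMem]
        refine Filter.Eventually.of_forall fun x hx => hy (hBT x hx.2 ?_)
        exact mem_gridCube_comm.1 hx.1
      simp [this]
  calc ∫⁻ x in B, ∫⁻ y in gridCube c x, f y
      = ∫⁻ y, volume.restrict B (gridCube c y) * f y := by
        have hcomm : ∀ y : EuclideanSpace ℝ ι,
            (·, y) ⁻¹' {p | p.2 ∈ gridCube c p.1} = gridCube c y :=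
          fun y => Set.ext fun x => mem_gridCube_comm
        have := lintegral_setLIntegral_preimage_mk_eq (μ := volume.restrict B) (ν := volume)
          (measurableSet_setOf_mem_gridCube c) hf
        simp only [hcomm] at this
        exact this
    _ ≤ ∫⁻ y, ENNReal.ofReal c ^ Fintype.card ι * T.indicator f y := lintegral_mono hweight
    _ ≤ ENNReal.ofReal c ^ Fintype.card ι * ∫⁻ y in T, f y := by
      rw [lintegral_const_mul' _ _ (by simp)]
      exact mul_le_mul_right (lintegral_indicator_le f T) _

end GridCube

theorem abs_setIntegral_setIntegral_gridCube_le {ι : Type*} [Fintype ι] {c : ℝ} (hc : 0 < c)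
    {H : EuclideanSpace ℝ ι → ℝ} (hH : Measurable H) {B T : Set (EuclideanSpace ℝ ι)}
    (hT : IntegrableOn H T) (hBT : ∀ x ∈ B, gridCube c x ⊆ T) :
    |∫ x in B, ∫ y in gridCube c x, H y| ≤ c ^ Fintype.card ι * ∫ y in T, |H y| := by
  have hrhs : 0 ≤ c ^ Fintype.card ι * ∫ y in T, |H y| :=
    mul_nonneg (by positivity) (integral_nonneg fun _ => abs_nonneg _)
  rw [← ENNReal.ofReal_le_ofReal_iff hrhs]
  calc ENNReal.ofReal |∫ x in B, ∫ y in gridCube c x, H y|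
      = ‖∫ x in B, ∫ y in gridCube c x, H y‖ₑ := (Real.enorm_eq_ofReal_abs _).symm
    _ ≤ ∫⁻ x in B, ‖∫ y in gridCube c x, H y‖ₑ := enorm_integral_le_lintegral_enorm _
    _ ≤ ∫⁻ x in B, ∫⁻ y in gridCube c x, ‖H y‖ₑ :=
      lintegral_mono fun _ => enorm_integral_le_lintegral_enorm _
    _ ≤ ENNReal.ofReal c ^ Fintype.card ι * ∫⁻ y in T, ‖H y‖ₑ :=
      setLIntegral_lintegral_gridCube_le hc hH.enorm hBT
    _ = ENNReal.ofReal (c ^ Fintype.card ι * ∫ y in T, |H y|) := by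
      simp_rw [ENNReal.ofReal_mul (pow_nonneg hc.le _), ENNReal.ofReal_pow hc.le,
        ← Real.norm_eq_abs, ofReal_integral_norm_eq_lintegral_enorm hT]

local notation "E3" => EuclideanSpace ℝ (Fin 3)

theorem gridCube_third_subset_ball {K : ℝ} (hK : 0 < K) (x : E3) :
    gridCube (K / 3) x ⊆ ball x K := fun _ hy =>
  have hsqrt : √3 < 3 := (Real.sqrt_lt' (by norm_num)).2 (by norm_num)
  mem_ball.2 <| (dist_le_of_mem_gridCube (by positivity) hy).trans_lt <| by
    simp only [Fintype.card_fin, Nat.cast_ofNat]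
    nlinarith

/-- The function `H_K` of the paper. -/
noncomputable def localizedWeight (α K A : ℝ) (H : E3 → ℝ) (x : E3) : ℝ :=
  A⁻¹ * K ^ (-α) * ∫ y in gridCube (K / 3) x, H y

section LocalizedWeight

variable {α K A R : ℝ} {H : E3 → ℝ}

theorem abs_localizedWeight_le_one (hK : 1 ≤ K) (hA : 0 < A) (h0 : ∀ x, 0 ≤ H x)
    {x : E3} (hint : IntegrableOn H (ball x K)) (hdim : ∫ y in ball x K, H y ≤ A * K ^ α) :
    |localizedWeight α K A H x| ≤ 1 := by
  have hK0 : 0 < K := by linarith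
  have hAK : 0 < A * K ^ α := mul_pos hA (Real.rpow_pos_of_pos hK0 α)
  have hcube : ∫ y in gridCube (K / 3) x, H y ≤ A * K ^ α :=
    (setIntegral_mono_set hint (ae_of_all _ h0)
      (gridCube_third_subset_ball hK0 x).eventuallyLE).trans hdim
  have hnorm : A⁻¹ * K ^ (-α) = (A * K ^ α)⁻¹ := by
    rw [Real.rpow_neg hK0.le, mul_inv]
  rw [localizedWeight, hnorm, abs_of_nonneg (mul_nonneg (inv_nonneg.2 hAK.le)
    (integral_nonneg h0)), inv_mul_le_iff₀ hAK, mul_one]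
  exact hcube

theorem setIntegral_localizedWeight_le_of_le (hα3 : α ≤ 3) (hK : 1 ≤ K) (hA : 0 < A)
    (h0 : ∀ x, 0 ≤ H x) (hint : ∀ x, IntegrableOn H (ball x K))
    (hdim : ∀ x, ∫ y in ball x K, H y ≤ A * K ^ α) (x₀ : E3) (hR : 0 < R) (hRK : R ≤ K) :
    ∫ x in ball x₀ R, localizedWeight α K A H x ≤ π * 4 / 3 * K ^ (3 - α) * R ^ α := by
  have hR3 : R ^ 3 ≤ K ^ (3 - α) * R ^ α := by
    rw [← Real.rpow_natCast, Nat.cast_ofNat, ← sub_add_cancel (3 : ℝ) α,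
      Real.rpow_add hR, add_sub_cancel_right]
    gcongr
  calc ∫ x in ball x₀ R, localizedWeight α K A H x
      ≤ ‖∫ x in ball x₀ R, localizedWeight α K A H x‖ := Real.le_norm_self _
    _ ≤ 1 * volume.real (ball x₀ R) := norm_setIntegral_le_of_norm_le_const measure_ball_lt_top
      fun x _ => abs_localizedWeight_le_one hK hA h0 (hint x) (hdim x)
    _ = π * 4 / 3 * R ^ 3 := by
      rw [measureReal_def, EuclideanSpace.volume_ball_fin_three, ENNReal.toReal_mul,
        ENNReal.toReal_pow, ENNReal.toReal_ofReal hR.le,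
        ENNReal.toReal_ofReal (by positivity)]
      ring
    _ ≤ π * 4 / 3 * K ^ (3 - α) * R ^ α := by
      rw [mul_assoc]
      gcongr

theorem setIntegral_localizedWeight_le_of_ge (hα : 0 ≤ α) (hα3 : α ≤ 3) (hK : 1 ≤ K)
    (hA : 0 < A) (hH : Measurable H) (h0 : ∀ x, 0 ≤ H x) {x₀ : E3}
    (hint : IntegrableOn H (ball x₀ (R + K)))
    (hdim : ∫ y in ball x₀ (R + K), H y ≤ A * (R + K) ^ α)
    (hKR : K ≤ R) :
    ∫ x in ball x₀ R, localizedWeight α K A H x ≤ 8 / 27 * K ^ (3 - α) * R ^ α := by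
  have hK0 : 0 < K := by linarith
  have hR0 : 0 < R := by linarith
  have hsupport : ∀ x ∈ ball x₀ R, gridCube (K / 3) x ⊆ ball x₀ (R + K) := fun x hx y hy => by
    have := mem_ball.1 (gridCube_third_subset_ball hK0 x hy)
    exact mem_ball.2 <| (dist_triangle y x x₀).trans_lt (by linarith [mem_ball.1 hx])
  have hdouble : ∫ x in ball x₀ R, ∫ y in gridCube (K / 3) x, H y
      ≤ (K / 3) ^ 3 * ∫ y in ball x₀ (R + K), H y := by
    have := abs_setIntegral_setIntegral_gridCube_le (by positivity) hH hint hsupport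
    simp only [Fintype.card_fin, abs_of_nonneg (h0 _)] at this
    exact (le_abs_self _).trans this
  have hpow : (R + K) ^ α ≤ 8 * R ^ α := calc
    (R + K) ^ α ≤ (2 * R) ^ α := by gcongr; linarith
    _ = 2 ^ α * R ^ α := Real.mul_rpow zero_le_two hR0.le
    _ ≤ 2 ^ (3 : ℝ) * R ^ α := by gcongr; norm_num
    _ = 8 * R ^ α := by norm_num
  have hscale : A⁻¹ * K ^ (-α) * (K / 3) ^ 3 * A = K ^ (3 - α) / 27 := by
    rw [Real.rpow_sub hK0, Real.rpow_neg hK0.le, Real.rpow_ofNat]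
    field_simp
    norm_num
  calc ∫ x in ball x₀ R, localizedWeight α K A H x
      = A⁻¹ * K ^ (-α) * ∫ x in ball x₀ R, ∫ y in gridCube (K / 3) x, H y :=
        integral_const_mul _ _
    _ ≤ A⁻¹ * K ^ (-α) * ((K / 3) ^ 3 * (A * (R + K) ^ α)) := by
      gcongr
      exact hdouble.trans (by gcongr)
    _ = K ^ (3 - α) / 27 * (R + K) ^ α := by rw [← hscale]; ring
    _ ≤ K ^ (3 - α) / 27 * (8 * R ^ α) := by gcongr
    _ = 8 / 27 * K ^ (3 - α) * R ^ α := by ring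

end LocalizedWeight

/-- localizing a weight of fractal dimension `α` at scale `K`
(averaging over a tiling of `ℝ³` by cubes of side `K/3` and normalizing by
`A⁻¹ K^{-α}`) produces a function satisfying the dimensionality bound with
constant `C K^{3-α}`, `C` absolute. -/
theorem stmt_4 :
    ∃ C : ℝ, 0 < C ∧ ∀ (α K A : ℝ), 0 < α → α ≤ 3 → 1 ≤ K → 0 < A →
      ∀ H : EuclideanSpace ℝ (Fin 3) → ℝ, Measurable H →
        (∀ x, 0 ≤ H x) → (∀ x, H x ≤ 1) →
        (∀ (x₀ : EuclideanSpace ℝ (Fin 3)) (ρ : ℝ), 1 ≤ ρ →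
          (∫ x in ball x₀ ρ, H x) ≤ A * ρ ^ α) →
        ∀ (x₀ : EuclideanSpace ℝ (Fin 3)) (R : ℝ), 1 ≤ R →
          (∫ x in ball x₀ R,
            (A⁻¹ * K ^ (-α) *
              ∫ y in {y : EuclideanSpace ℝ (Fin 3) |
                ∀ i, ⌊y i / (K/3)⌋ = ⌊x i / (K/3)⌋}, H y))
          ≤ C * K ^ (3 - α) * R ^ α := by
  refine ⟨π * 4 / 3, by positivity, ?_⟩
  intro α K A hα hα3 hK hA H hH h0 h1 hdim x₀ R hR
  have hint : ∀ x r, IntegrableOn H (ball x r) := fun x r =>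
    Measure.integrableOn_of_bounded (M := 1) measure_ball_lt_top.ne hH.aestronglyMeasurable
      (ae_of_all _ fun y => by rw [Real.norm_eq_abs, abs_of_nonneg (h0 y)]; exact h1 y)
  change ∫ x in ball x₀ R, localizedWeight α K A H x ≤ _
  rcases le_total R K with hRK | hKR
  · exact setIntegral_localizedWeight_le_of_le hα3 hK hA h0 (hint · K) (hdim · K hK) x₀
      (by linarith) hRK
  · calc ∫ x in ball x₀ R, localizedWeight α K A H x ≤ 8 / 27 * K ^ (3 - α) * R ^ α :=
          setIntegral_localizedWeight_le_of_ge hα.le hα3 hK hA hH h0 (hint x₀ _)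
            (hdim x₀ _ (by linarith)) hKR
      _ ≤ π * 4 / 3 * K ^ (3 - α) * R ^ α := by gcongr ?_ * _ * _; linarith [pi_gt_three]
end

section
/- Let n ∈ ℕ, D ∈ ℕ, and let O₁, …, O_M be pairwise disjoint open subsets of ℝⁿ whose union is ℝⁿ \ Z(P) for a nonzero polynomial P of degree at most D, such that each O_i is a union of connected components of ℝⁿ \ Z(P). Then any line ℓ ⊂ ℝⁿ not contained in Z(P) intersects at most D + 1 of the sets O_i. -/
/-- if the cells `O i` are pairwise disjoint open sets, each a
union of connected components of `ℝⁿ \ Z(P)` with union `ℝⁿ \ Z(P)`, for a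
nonzero polynomial `P` of degree at most `D`, then any line not contained in
`Z(P)` intersects at most `D + 1` of the cells. -/
theorem stmt_9 (n D : ℕ) (P : MvPolynomial (Fin n) ℝ) (hP : P ≠ 0)
    (hdeg : P.totalDegree ≤ D) (M : ℕ) (O : Fin M → Set (Fin n → ℝ))
    (hopen : ∀ i, IsOpen (O i))
    (hdisj : ∀ i j, i ≠ j → Disjoint (O i) (O j))
    (hunion : (⋃ i, O i) = {x | MvPolynomial.eval x P = 0}ᶜ)
    (hcomp : ∀ i, ∀ x ∈ O i,
      connectedComponentIn {x : Fin n → ℝ | MvPolynomial.eval x P = 0}ᶜ x ⊆ O i)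
    (u v : Fin n → ℝ) (hv : v ≠ 0)
    (hline : ¬ ({x | ∃ t : ℝ, x = u + t • v} ⊆ {x | MvPolynomial.eval x P = 0})) :
    Nat.card {i : Fin M // ({x | ∃ t : ℝ, x = u + t • v} ∩ O i).Nonempty} ≤ D + 1 := by
  classical
  set Z : Set (Fin n → ℝ) := {x | MvPolynomial.eval x P = 0} with hZ
  set L : Set (Fin n → ℝ) := {x | ∃ t : ℝ, x = u + t • v} with hLdef
  -- the univariate restriction of P to the line
  set q : Polynomial ℝ := MvPolynomial.eval₂ Polynomial.C
      (fun k => Polynomial.C (u k) + Polynomial.C (v k) * Polynomial.X) P with hq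
  have hqeval : ∀ t : ℝ, q.eval t = MvPolynomial.eval (u + t • v) P := by
    intro t
    have h1 := MvPolynomial.eval₂_comp_left (Polynomial.evalRingHom t) Polynomial.C
      (fun k => Polynomial.C (u k) + Polynomial.C (v k) * Polynomial.X) P
    have h2 : (Polynomial.evalRingHom t).comp Polynomial.C = RingHom.id ℝ := by
      ext a; simp
    have h3 : (u + t • v) = fun k => Polynomial.eval t
        (Polynomial.C (u k) + Polynomial.C (v k) * Polynomial.X) := by
      funext k
      simp only [Polynomial.eval_add, Polynomial.eval_mul, Polynomial.eval_C,
        Polynomial.eval_X, Pi.add_apply, Pi.smul_apply, smul_eq_mul]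
      ring
    rw [hq]
    calc Polynomial.eval t (MvPolynomial.eval₂ Polynomial.C _ P)
        = Polynomial.evalRingHom t (MvPolynomial.eval₂ Polynomial.C _ P) := rfl
      _ = MvPolynomial.eval₂ (RingHom.id ℝ) _ P := by rw [h1, h2]
      _ = MvPolynomial.eval (u + t • v) P := by
          rw [MvPolynomial.eval₂_eq, MvPolynomial.eval_eq, h3]
          rfl
  have hqdeg : q.natDegree ≤ D := by
    rw [hq, MvPolynomial.eval₂_eq]
    apply Polynomial.natDegree_sum_le_of_forall_le
    intro d hd
    calc (Polynomial.C (MvPolynomial.coeff d P) *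
            ∏ k ∈ d.support, (Polynomial.C (u k) + Polynomial.C (v k) * Polynomial.X) ^ d k).natDegree
        ≤ (∏ k ∈ d.support,
            (Polynomial.C (u k) + Polynomial.C (v k) * Polynomial.X) ^ d k).natDegree :=
          Polynomial.natDegree_C_mul_le _ _
      _ ≤ ∑ k ∈ d.support,
            ((Polynomial.C (u k) + Polynomial.C (v k) * Polynomial.X) ^ d k).natDegree :=
          Polynomial.natDegree_prod_le _ _
      _ ≤ ∑ k ∈ d.support, d k := by
          apply Finset.sum_le_sum
          intro k _
          calc ((Polynomial.C (u k) + Polynomial.C (v k) * Polynomial.X) ^ d k).natDegree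
              ≤ d k * (Polynomial.C (u k) + Polynomial.C (v k) * Polynomial.X).natDegree :=
                Polynomial.natDegree_pow_le
            _ ≤ d k * 1 := by
                apply Nat.mul_le_mul_left
                apply le_trans (Polynomial.natDegree_add_le _ _)
                apply max_le
                · simp
                · exact le_trans (Polynomial.natDegree_C_mul_le _ _) (by simp)
            _ = d k := mul_one _
      _ ≤ P.totalDegree := MvPolynomial.le_totalDegree hd
      _ ≤ D := hdeg
  have hq0 : q ≠ 0 := by
    rw [Set.not_subset] at hline
    obtain ⟨x, hxL, hxZ⟩ := hline
    obtain ⟨t, rfl⟩ := hxL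
    intro h
    apply hxZ
    have := hqeval t
    rw [h] at this
    simpa [hZ] using this.symm
  -- segments of the line avoiding roots of q stay in one connected component
  have key : ∀ s t : ℝ, (∀ r ∈ Set.uIcc s t, Polynomial.eval r q ≠ 0) →
      u + t • v ∈ connectedComponentIn Zᶜ (u + s • v) := by
    intro s t h
    have hc : IsPreconnected ((fun r : ℝ => u + r • v) '' Set.uIcc s t) :=
      isPreconnected_uIcc.image _ (Continuous.continuousOn (by continuity))
    have hsub : (fun r : ℝ => u + r • v) '' Set.uIcc s t ⊆ Zᶜ := by
      rintro _ ⟨r, hr, rfl⟩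
      intro hmem
      exact h r hr (by rw [hqeval r]; exact hmem)
    exact hc.subset_connectedComponentIn ⟨s, Set.left_mem_uIcc, rfl⟩ hsub
      ⟨t, Set.right_mem_uIcc, rfl⟩
  have hOZ : ∀ i, O i ⊆ Zᶜ := by
    intro i
    rw [← hunion]
    exact Set.subset_iUnion O i
  set S := {i : Fin M // (L ∩ O i).Nonempty} with hS
  have hT : ∀ i : S, ∃ t : ℝ, u + t • v ∈ O i.1 := by
    intro i
    obtain ⟨x, hxL, hxO⟩ := i.2
    obtain ⟨t, rfl⟩ := hxL
    exact ⟨t, hxO⟩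
  choose T hTO using hT
  have hTq : ∀ i : S, Polynomial.eval (T i) q ≠ 0 := by
    intro i h
    exact hOZ i.1 (hTO i) (by rw [hqeval] at h; exact h)
  set R : Finset ℝ := q.roots.toFinset with hR
  have hRcard : R.card ≤ D := by
    calc R.card ≤ Multiset.card q.roots := Multiset.toFinset_card_le _
      _ ≤ q.natDegree := Polynomial.card_roots' q
      _ ≤ D := hqdeg
  -- between two points of the line in different cells there is a root
  have root_between : ∀ i j : S, i.1 ≠ j.1 → T i < T j →
      ∃ r ∈ R, T i < r ∧ r < T j := by
    intro i j hij hlt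
    by_contra hno
    push_neg at hno
    have hni : ∀ r ∈ Set.uIcc (T i) (T j), Polynomial.eval r q ≠ 0 := by
      intro r hr
      rw [Set.uIcc_of_le hlt.le] at hr
      rcases eq_or_lt_of_le hr.1 with h1 | h1
      · rw [← h1]; exact hTq i
      rcases eq_or_lt_of_le hr.2 with h2 | h2
      · rw [h2]; exact hTq j
      intro h0
      have hrR : r ∈ R := by
        rw [hR, Multiset.mem_toFinset, Polynomial.mem_roots hq0]
        exact h0
      exact absurd h2 (not_lt.mpr (hno r hrR h1))
    have hmem : u + T j • v ∈ O i.1 := hcomp i.1 _ (hTO i) (key (T i) (T j) hni)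
    exact Set.disjoint_left.mp (hdisj i.1 j.1 hij) hmem (hTO j)
  have mono : ∀ i j : S, i.1 ≠ j.1 → T i < T j →
      (R.filter (· < T i)).card < (R.filter (· < T j)).card := by
    intro i j hij hlt
    obtain ⟨r, hrR, hr1, hr2⟩ := root_between i j hij hlt
    apply Finset.card_lt_card
    constructor
    · intro a ha
      rw [Finset.mem_filter] at ha ⊢
      exact ⟨ha.1, ha.2.trans hlt⟩
    · intro hsub
      have := hsub (Finset.mem_filter.mpr ⟨hrR, hr2⟩)
      exact absurd (Finset.mem_filter.mp this).2 (not_lt.mpr hr1.le)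
  set f : S → Fin (D + 1) := fun i =>
    ⟨(R.filter (· < T i)).card,
      Nat.lt_succ_of_le ((Finset.card_filter_le _ _).trans hRcard)⟩ with hf
  have finj : Function.Injective f := by
    intro i j hfij
    by_contra hij
    have hij' : i.1 ≠ j.1 := fun h => hij (Subtype.ext h)
    have hTne : T i ≠ T j := by
      intro h
      have h1 := hTO i
      rw [h] at h1
      exact Set.disjoint_left.mp (hdisj i.1 j.1 hij') h1 (hTO j)
    have hc : (R.filter (· < T i)).card = (R.filter (· < T j)).card :=
      congrArg Fin.val hfij
    rcases hTne.lt_or_gt with h | h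
    · exact absurd hc (mono i j hij' h).ne
    · exact absurd hc.symm (mono j i hij'.symm h).ne
  calc Nat.card S ≤ Nat.card (Fin (D + 1)) := Nat.card_le_card_of_injective f finj
    _ = D + 1 := by simp
end

section
/- Let D ∈ ℕ and let O₁', …, O_M' be sets in ℝ³ of the form O_i' = O_i \ W, where the O_i are pairwise disjoint unions of connected components of ℝ³ \ Z(P) for a nonzero polynomial P of degree ≤ D, and W is the ρ-neighborhood of Z(P) for some ρ > 0. If T is a solid cylinder (tube) of radius ρ whose core line ℓ is not contained in Z(P), then T intersects at most D + 1 of the sets O_i'. -/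
/-!
Restricted to the core line `t ↦ u + t • v`, the polynomial `P` becomes a nonzero one-variable
polynomial of degree at most `D`, so the line meets `Z(P)` in at most `D` points and these cut it
into at most `D + 1` intervals. A point `x` of the tube outside the `ρ`-neighbourhood of `Z(P)` is
joined to its nearest point on the line by a segment avoiding `Z(P)`, so every cell met by the tube
contains a point of the line off `Z(P)`; points of the line in a common interval lie in a common
component of the complement of `Z(P)`, hence in a common cell.
-/

open Metric Polynomial Function

theorem Nat.card_le_card_add_one_of_exists_mem_Ico {α ι : Type*} [LinearOrder α]
    (S : Finset α) {t : ι → α} (ht : Injective t)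
    (hS : ∀ i j, t i < t j → ∃ s ∈ S, t i ≤ s ∧ s < t j) : Nat.card ι ≤ S.card + 1 := by
  classical
  -- the number of points of `S` below `t i` increases strictly with `t i`
  let f : ι → Fin (S.card + 1) := fun i =>
    ⟨(S.filter (· < t i)).card, Nat.lt_succ_of_le (Finset.card_filter_le _ _)⟩
  have hf : ∀ i j, t i < t j → f i < f j := by
    intro i j hij
    obtain ⟨s, hsS, his, hsj⟩ := hS i j hij
    refine Fin.mk_lt_mk.mpr (Finset.card_lt_card ?_)
    refine (Finset.ssubset_iff_of_subset
      (Finset.monotone_filter_right S fun _ _ h => h.trans hij)).mpr ⟨s, ?_, ?_⟩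
    · simpa [hsS] using hsj
    · simp [his]
  have hinj : Injective f := fun i j hij => by
    by_contra hne
    rcases (ht.ne hne).lt_or_gt with h | h
    · exact (hf i j h).ne hij
    · exact (hf j i h).ne hij.symm
  simpa using Nat.card_le_card_of_injective f hinj

theorem isClosed_setOf_exists_eq_add_smul {E : Type*} [AddCommGroup E] [Module ℝ E]
    [TopologicalSpace E] [IsTopologicalAddGroup E] [ContinuousSMul ℝ E] [T2Space E] (u v : E) :
    IsClosed {x : E | ∃ t : ℝ, x = u + t • v} := by
  convert (Submodule.closed_of_finiteDimensional (ℝ ∙ v)).preimage (continuous_sub_right u)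
    using 1
  ext x
  simp only [Set.mem_preimage, SetLike.mem_coe, Submodule.mem_span_singleton, eq_sub_iff_add_eq]
  constructor <;> rintro ⟨t, rfl⟩ <;> exact ⟨t, add_comm _ _⟩

theorem mem_connectedComponentIn_compl_of_dist_le {E : Type*} [NormedAddCommGroup E]
    [NormedSpace ℝ E] {Z : Set E} {ρ : ℝ} {x y : E} (hx : x ∉ cthickening ρ Z)
    (hxy : dist x y ≤ ρ) : y ∈ connectedComponentIn Zᶜ x := by
  have hseg : segment ℝ x y ⊆ Zᶜ := fun z hz hzZ =>
    hx (mem_cthickening_of_dist_le x z ρ Z hzZ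
      ((mem_closedBall'.mp (segment_subset_closedBall_left x y hz)).trans hxy))
  exact (convex_segment x y).isPreconnected.subset_connectedComponentIn
    (left_mem_segment ℝ x y) hseg (right_mem_segment ℝ x y)

theorem add_smul_mem_connectedComponentIn_compl {E : Type*} [AddCommGroup E] [Module ℝ E]
    [TopologicalSpace E] [ContinuousAdd E] [ContinuousSMul ℝ E] {Z : Set E} {u v : E} {a b : ℝ}
    (hab : a ≤ b) (hZ : ∀ s ∈ Set.Icc a b, u + s • v ∉ Z) :
    u + b • v ∈ connectedComponentIn Zᶜ (u + a • v) :=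
  (isPreconnected_Icc.image _ (by fun_prop : Continuous fun s : ℝ => u + s • v).continuousOn
    ).subset_connectedComponentIn (Set.mem_image_of_mem _ (Set.left_mem_Icc.mpr hab))
    (fun _ ⟨s, hs, hz⟩ => hz ▸ hZ s hs) (Set.mem_image_of_mem _ (Set.right_mem_Icc.mpr hab))

namespace MvPolynomial

variable {σ R : Type*} [CommRing R]

theorem natDegree_aeval_le_totalDegree (P : MvPolynomial σ R) {g : σ → R[X]}
    (hg : ∀ i, (g i).natDegree ≤ 1) : (aeval g P).natDegree ≤ P.totalDegree := by
  rw [aeval_def, eval₂_eq]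
  refine natDegree_sum_le_of_forall_le _ _ fun d hd => ?_
  calc (algebraMap R R[X] (P.coeff d) * ∏ i ∈ d.support, g i ^ d i).natDegree
      ≤ ∑ i ∈ d.support, (g i ^ d i).natDegree :=
        (natDegree_C_mul_le _ _).trans (natDegree_prod_le _ _)
    _ ≤ ∑ i ∈ d.support, d i := Finset.sum_le_sum fun i _ =>
        natDegree_pow_le.trans (by simpa using Nat.mul_le_mul_left (d i) (hg i))
    _ ≤ P.totalDegree := le_totalDegree hd

noncomputable def restrictToLine (P : MvPolynomial σ R) (u v : σ → R) : R[X] :=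
  aeval (fun i => Polynomial.C (u i) + Polynomial.C (v i) * Polynomial.X) P

theorem eval_restrictToLine (P : MvPolynomial σ R) (u v : σ → R) (t : R) :
    (P.restrictToLine u v).eval t = eval (u + t • v) P := by
  rw [restrictToLine, ← Polynomial.coe_aeval_eq_eval, ← AlgHom.comp_apply, comp_aeval]
  change aeval _ P = aeval (u + t • v) P
  congr 2
  funext i
  simp only [map_add, Polynomial.aeval_C, Polynomial.aeval_X, map_mul,
    Algebra.algebraMap_self, RingHom.id_apply, Pi.add_apply, Pi.smul_apply, smul_eq_mul, mul_comm]

theorem natDegree_restrictToLine_le (P : MvPolynomial σ R) (u v : σ → R) :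
    (P.restrictToLine u v).natDegree ≤ P.totalDegree :=
  P.natDegree_aeval_le_totalDegree fun _ => natDegree_linear_le.trans_eq' (by rw [add_comm])

end MvPolynomial

theorem Nat.card_le_card_add_one_of_cells_along_line {E ι : Type*} [AddCommGroup E]
    [Module ℝ E] [TopologicalSpace E] [ContinuousAdd E] [ContinuousSMul ℝ E] {Z : Set E}
    {O : ι → Set E} (hdisj : Pairwise (Disjoint on O))
    (hcomp : ∀ i, ∀ x ∈ O i, connectedComponentIn Zᶜ x ⊆ O i) {u v : E} (S : Finset ℝ)
    (hS : ∀ s, u + s • v ∈ Z → s ∈ S) {t : ι → ℝ} (ht : ∀ i, u + t i • v ∈ O i \ Z) :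
    Nat.card ι ≤ S.card + 1 := by
  have hnot : ∀ i j, i ≠ j → u + t j • v ∉ O i := fun i j hij h =>
    Set.disjoint_left.mp (hdisj hij) h (ht j).1
  refine Nat.card_le_card_add_one_of_exists_mem_Ico S (t := t) (fun i j hij => ?_) fun i j hij => ?_
  · by_contra hne
    exact hnot i j hne (hij ▸ (ht i).1)
  · by_contra! hno
    refine hnot i j (fun h => hij.ne (congrArg t h)) (hcomp i _ (ht i).1
      (add_smul_mem_connectedComponentIn_compl hij.le fun s hs hsZ => (ht j).2 ?_))
    rwa [le_antisymm hs.2 (hno s (hS s hsZ) hs.1)] at hsZ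

theorem stmt_19_general (D : ℕ) (P : MvPolynomial (Fin 3) ℝ)
    (hdeg : P.totalDegree ≤ D) (ρ : ℝ) (hρ : 0 < ρ)
    (M : ℕ) (O : Fin M → Set (EuclideanSpace ℝ (Fin 3)))
    (hdisj : ∀ i j, i ≠ j → Disjoint (O i) (O j))
    (hcomp : ∀ i, ∀ x ∈ O i,
      connectedComponentIn {x : EuclideanSpace ℝ (Fin 3) | MvPolynomial.eval x P = 0}ᶜ x ⊆ O i)
    (u v : EuclideanSpace ℝ (Fin 3))
    (hline : ¬ ({x : EuclideanSpace ℝ (Fin 3) | ∃ t : ℝ, x = u + t • v} ⊆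
      {x : EuclideanSpace ℝ (Fin 3) | MvPolynomial.eval x P = 0})) :
    Nat.card {i : Fin M //
      ((cthickening ρ {x : EuclideanSpace ℝ (Fin 3) | ∃ t : ℝ, x = u + t • v}) ∩
        (O i \ cthickening ρ {x : EuclideanSpace ℝ (Fin 3) | MvPolynomial.eval x P = 0})).Nonempty}
      ≤ D + 1 := by
  set Z := {x : EuclideanSpace ℝ (Fin 3) | MvPolynomial.eval x P = 0}
  set L := {x : EuclideanSpace ℝ (Fin 3) | ∃ t : ℝ, x = u + t • v}
  set q := P.restrictToLine u v
  have hq : ∀ t : ℝ, q.eval t = MvPolynomial.eval (u + t • v) P := fun t => by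
    simp [q, MvPolynomial.eval_restrictToLine]
  have hq0 : q ≠ 0 := by
    obtain ⟨_, ⟨t, rfl⟩, ht⟩ := Set.not_subset.mp hline
    exact fun h => ht (show MvPolynomial.eval _ P = 0 by rw [← hq, h, Polynomial.eval_zero])
  have hcell : ∀ i : {i // (cthickening ρ L ∩ (O i \ cthickening ρ Z)).Nonempty},
      ∃ t : ℝ, u + t • v ∈ O i \ Z := by
    rintro ⟨i, x, hxL, hxO, hxW⟩
    rw [(isClosed_setOf_exists_eq_add_smul u v).cthickening_eq_biUnion_closedBall hρ.le] at hxL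
    obtain ⟨y, ⟨t, rfl⟩, hxy⟩ := Set.mem_iUnion₂.mp hxL
    have hy := mem_connectedComponentIn_compl_of_dist_le hxW (mem_closedBall.mp hxy)
    exact ⟨t, hcomp i x hxO hy, connectedComponentIn_subset _ _ hy⟩
  choose t ht using hcell
  have hroots : ∀ s, u + s • v ∈ Z → s ∈ q.roots.toFinset := fun s hs =>
    Multiset.mem_toFinset.mpr ((mem_roots hq0).mpr (by rw [IsRoot, hq]; exact hs))
  calc _ ≤ q.roots.toFinset.card + 1 :=
        Nat.card_le_card_add_one_of_cells_along_line (O := fun i => O i.1)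
          (fun i j hij => hdisj _ _ (Subtype.coe_injective.ne hij)) (fun i => hcomp i) _ hroots ht
    _ ≤ D + 1 := by
      gcongr
      exact (Multiset.toFinset_card_le _).trans
        ((card_roots' q).trans ((P.natDegree_restrictToLine_le u v).trans hdeg))

/-- a tube of radius `ρ` whose core line is not contained in
`Z(P)` intersects at most `D+1` of the modified cells `O_i' = O_i \ W`, where
`W` is the `ρ`-neighborhood of `Z(P)` and the `O_i` are pairwise disjoint
unions of connected components of `ℝ³ \ Z(P)`, for `P` a nonzero polynomial
of degree at most `D`. -/
theorem stmt_19 (D : ℕ) (P : MvPolynomial (Fin 3) ℝ) (hP : P ≠ 0)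
    (hdeg : P.totalDegree ≤ D) (ρ : ℝ) (hρ : 0 < ρ)
    (M : ℕ) (O : Fin M → Set (EuclideanSpace ℝ (Fin 3)))
    (hdisj : ∀ i j, i ≠ j → Disjoint (O i) (O j))
    (hsub : ∀ i, O i ⊆ {x : EuclideanSpace ℝ (Fin 3) | MvPolynomial.eval x P = 0}ᶜ)
    (hcomp : ∀ i, ∀ x ∈ O i,
      connectedComponentIn {x : EuclideanSpace ℝ (Fin 3) | MvPolynomial.eval x P = 0}ᶜ x ⊆ O i)
    (u v : EuclideanSpace ℝ (Fin 3)) (hv : v ≠ 0)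
    (hline : ¬ ({x : EuclideanSpace ℝ (Fin 3) | ∃ t : ℝ, x = u + t • v} ⊆
      {x : EuclideanSpace ℝ (Fin 3) | MvPolynomial.eval x P = 0})) :
    Nat.card {i : Fin M //
      ((cthickening ρ {x : EuclideanSpace ℝ (Fin 3) | ∃ t : ℝ, x = u + t • v}) ∩
        (O i \ cthickening ρ {x : EuclideanSpace ℝ (Fin 3) | MvPolynomial.eval x P = 0})).Nonempty}
      ≤ D + 1 :=
  stmt_19_general D P hdeg ρ hρ M O hdisj hcomp u v hline
end
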